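/- Let G be a Borel probability measure on ℝ × ℝ^p with finite second moments, w₀ = (y₀, x₀) ∈ ℝ × ℝ^p, and G_ε = (1 − ε)G + ε δ_{w₀} for ε ∈ [0, 1). Let S ⊆ ℝ be a Borel set with w = G(S × ℝ^p) > 0; let μ_S, μ_{y,S} denote the conditional means of X and Y given {Y ∈ S} under G, assume Σ_S = Var_G(X | Y ∈ S) is invertible, and set b_S = Σ_S⁻¹ Cov_G(X, Y | Y ∈ S). Then the map ε ↦ [Var_{G_ε}(X | Y ∈ S)]⁻¹ Cov_{G_ε}(X, Y | Y ∈ S) is right-differentiable at ε = 0, with derivative 1{y₀ ∈ S} · (1/w) · r₀ · Σ_S⁻¹ (x₀ − μ_S), where r₀ = y₀ − μ_{y,S} − b_Sᵀ(x₀ − μ_S) is the within-slice least-squares residual of the contaminant. -/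

import Mathlib

/-!
Conditioning the contaminated law on the slice `T = {Y ∈ S}` yields again a point
contamination `(1 - t) Q + t δ_{w₀}` of the conditional law `Q`, with fraction
`t(ε) = χ ε / ((1 - ε) w + χ ε)`, `χ = 1{y₀ ∈ S}`, so `t'(0) = χ / w`.
Under such a contamination the covariance matrix and covariance vector become
`(1 - t) (Σ + t d dᵀ)` and `(1 - t) (c + t e d)`, where `d = x₀ - μ_S` and `e = y₀ - μ_{y,S}`.
By Sherman–Morrison the slope is then exactly `b + t / (1 + t dᵀ Σ⁻¹ d) · r₀ Σ⁻¹ d`,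
whose derivative at `t = 0` is `r₀ Σ⁻¹ d`.
-/

open MeasureTheory ProbabilityTheory Matrix

namespace Matrix

variable {K n : Type*} [Field K] [Fintype n] [DecidableEq n]

theorem det_add_vecMulVec {A : Matrix n n K} (hA : IsUnit A.det) (u v : n → K) :
    (A + vecMulVec u v).det = A.det * (1 + v ⬝ᵥ A⁻¹ *ᵥ u) := by
  rw [vecMulVec_eq Unit, det_add_replicateCol_mul_replicateRow hA, Matrix.mul_assoc,
    det_unique (1 + _)]
  rfl

theorem isUnit_det_add_vecMulVec {A : Matrix n n K} (hA : IsUnit A.det) {u v : n → K}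
    (huv : 1 + v ⬝ᵥ A⁻¹ *ᵥ u ≠ 0) : IsUnit (A + vecMulVec u v).det := by
  rw [det_add_vecMulVec hA]
  exact hA.mul (isUnit_iff_ne_zero.2 huv)

/-- Sherman–Morrison, in the form of the solution of a rank-one perturbed linear system. -/
theorem inv_add_vecMulVec_mulVec {A : Matrix n n K} (hA : IsUnit A.det) {u v : n → K}
    (huv : 1 + v ⬝ᵥ A⁻¹ *ᵥ u ≠ 0) (c : n → K) (e : K) :
    (A + vecMulVec u v)⁻¹ *ᵥ (c + e • u)
      = A⁻¹ *ᵥ c + ((e - v ⬝ᵥ A⁻¹ *ᵥ c) / (1 + v ⬝ᵥ A⁻¹ *ᵥ u)) • A⁻¹ *ᵥ u := by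
  have := (A + vecMulVec u v).invertibleOfIsUnitDet (isUnit_det_add_vecMulVec hA huv)
  refine inv_mulVec_eq_vec ?_
  rw [add_mulVec, mulVec_add, mulVec_add, mulVec_smul, mulVec_smul, mulVec_mulVec, mulVec_mulVec,
    mul_nonsing_inv _ hA, one_mulVec, one_mulVec, vecMulVec_mulVec, vecMulVec_mulVec]
  simp only [op_smul_eq_smul, smul_smul, add_assoc, ← add_smul]
  congr 2
  field_simp
  ring

theorem inv_smul_mulVec_smul {A : Matrix n n K} (hA : IsUnit A.det) {s : K} (hs : s ≠ 0)
    (v : n → K) : (s • A)⁻¹ *ᵥ (s • v) = A⁻¹ *ᵥ v := by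
  let := invertibleOfNonzero hs
  rw [inv_smul A s hA, smul_mulVec, mulVec_smul, smul_smul, invOf_mul_self, one_smul]

end Matrix

theorem MeasureTheory.MemLp.cond {α E : Type*} [MeasurableSpace α] [NormedAddCommGroup E]
    {μ : Measure α} {f : α → E} {q : ENNReal} {s : Set α} (hf : MemLp f q μ) (hμs : μ s ≠ 0) :
    MemLp f q (μ[|s]) :=
  hf.restrict s |>.smul_measure (ENNReal.inv_ne_top.2 hμs)

theorem integral_sub_mul_sub {α : Type*} [MeasurableSpace α] {μ : Measure α}
    [IsProbabilityMeasure μ] {f g : α → ℝ} (hf : MemLp f 2 μ) (hg : MemLp g 2 μ) (a b : ℝ) :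
    ∫ x, (f x - a) * (g x - b) ∂μ = cov[f, g; μ] + (μ[f] - a) * (μ[g] - b) := by
  have hcov := covariance_eq_sub (X := fun x => f x - a) (Y := fun x => g x - b)
    (hf.sub (memLp_const a)) (hg.sub (memLp_const b))
  rw [covariance_sub_const_left (hf.integrable one_le_two),
    covariance_sub_const_right (hg.integrable one_le_two)] at hcov
  rw [hcov, integral_sub (hf.integrable one_le_two) (integrable_const a),
    integral_sub (hg.integrable one_le_two) (integrable_const b)]
  simp

-- With `w = μ T` and `χ = 1{z ∈ T}`, the share of the point mass in `(contaminate μ ε z)[|T]`.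
noncomputable def condFraction (w χ ε : ℝ) : ℝ := χ * ε / ((1 - ε) * w + χ * ε)

theorem condFraction_mem_Ico {w χ ε : ℝ} (hw : 0 < w) (hχ : 0 ≤ χ) (hε0 : 0 ≤ ε) (hε1 : ε < 1) :
    condFraction w χ ε ∈ Set.Ico 0 1 := by
  have : 0 < (1 - ε) * w := mul_pos (by linarith) hw
  exact ⟨by unfold condFraction; positivity, (div_lt_one (by positivity)).2 (by linarith)⟩

theorem hasDerivAt_condFraction {w : ℝ} (hw : w ≠ 0) (χ : ℝ) :
    HasDerivAt (condFraction w χ) (χ / w) 0 := by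
  have hnum := (hasDerivAt_id' (0 : ℝ)).const_mul χ
  have hden := (((hasDerivAt_id' (0 : ℝ)).const_sub 1).mul_const w).add hnum
  refine (hnum.fun_div hden (by simpa using hw)).congr_deriv ?_
  norm_num
  field_simp

theorem hasDerivAt_div_one_add_mul (k : ℝ) : HasDerivAt (fun s : ℝ => s / (1 + s * k)) 1 0 := by
  simpa using (hasDerivAt_id' (0 : ℝ)).fun_div (((hasDerivAt_id' (0 : ℝ)).mul_const k).const_add 1)
    (by simp)

theorem Set.indicator_one_nonneg {α : Type*} (s : Set α) (a : α) : (0 : ℝ) ≤ s.indicator 1 a :=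
  Set.indicator_nonneg (fun _ _ => zero_le_one) a

noncomputable def contaminate {α : Type*} [MeasurableSpace α] (μ : Measure α) (ε : ℝ) (z : α) :
    Measure α :=
  ENNReal.ofReal (1 - ε) • μ + ENNReal.ofReal ε • Measure.dirac z

section Contamination

variable {α : Type*} [MeasurableSpace α] {μ : Measure α} {ε : ℝ} {z : α}

theorem integral_contaminate [MeasurableSingletonClass α] (hε0 : 0 ≤ ε) (hε1 : ε ≤ 1)
    {f : α → ℝ} (hf : Integrable f μ) :
    ∫ x, f x ∂contaminate μ ε z = (1 - ε) * ∫ x, f x ∂μ + ε * f z := by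
  rw [contaminate, integral_add_measure (hf.smul_measure ENNReal.ofReal_ne_top)
      ((integrable_dirac (by simp)).smul_measure ENNReal.ofReal_ne_top),
    integral_smul_measure, integral_smul_measure, integral_dirac,
    ENNReal.toReal_ofReal (by linarith), ENNReal.toReal_ofReal hε0, smul_eq_mul, smul_eq_mul]

theorem covariance_contaminate [MeasurableSingletonClass α] [IsProbabilityMeasure μ]
    (hε0 : 0 ≤ ε) (hε1 : ε ≤ 1) {f g : α → ℝ} (hf : MemLp f 2 μ) (hg : MemLp g 2 μ) :
    cov[f, g; contaminate μ ε z]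
      = (1 - ε) * cov[f, g; μ] + ε * (1 - ε) * (f z - μ[f]) * (g z - μ[g]) := by
  have hprod (a b : ℝ) : Integrable (fun x => (f x - a) * (g x - b)) μ :=
    (hf.sub (memLp_const a)).integrable_mul (hg.sub (memLp_const b))
  rw [covariance, integral_contaminate hε0 hε1 (hf.integrable one_le_two),
    integral_contaminate hε0 hε1 (hg.integrable one_le_two),
    integral_contaminate hε0 hε1 (hprod _ _), integral_sub_mul_sub hf hg]
  ring

theorem restrict_contaminate {T : Set α} (hT : MeasurableSet T) :
    (contaminate μ ε z).restrict T
      = ENNReal.ofReal (1 - ε) • μ.restrict T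
        + ENNReal.ofReal (T.indicator 1 z * ε) • Measure.dirac z := by
  classical
  rw [contaminate, Measure.restrict_add, Measure.restrict_smul, Measure.restrict_smul,
    restrict_dirac' hT]
  by_cases hz : z ∈ T <;> simp [hz]

theorem contaminate_apply [IsFiniteMeasure μ] {T : Set α} (hT : MeasurableSet T) (hε0 : 0 ≤ ε)
    (hε1 : ε ≤ 1) :
    contaminate μ ε z T = ENNReal.ofReal ((1 - ε) * (μ T).toReal + T.indicator 1 z * ε) := by
  rw [← Measure.restrict_apply_univ, restrict_contaminate hT, Measure.add_apply,
    Measure.smul_apply, Measure.smul_apply, Measure.restrict_apply_univ, measure_univ,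
    smul_eq_mul, smul_eq_mul, mul_one, ← ENNReal.ofReal_toReal (measure_ne_top μ T),
    ← ENNReal.ofReal_mul (by linarith), ENNReal.toReal_ofReal ENNReal.toReal_nonneg,
    ← ENNReal.ofReal_add (by positivity) (mul_nonneg (T.indicator_one_nonneg z) hε0)]

theorem cond_contaminate [IsFiniteMeasure μ] {T : Set α} (hT : MeasurableSet T) (hμT : μ T ≠ 0)
    (hε0 : 0 ≤ ε) (hε1 : ε < 1) :
    (contaminate μ ε z)[|T]
      = contaminate (μ[|T]) (condFraction (μ T).toReal (T.indicator 1 z) ε) z := by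
  have hw : 0 < (μ T).toReal := ENNReal.toReal_pos hμT (measure_ne_top μ T)
  have ht := condFraction_mem_Ico hw (T.indicator_one_nonneg z) hε0 hε1
  have hD : 0 < (1 - ε) * (μ T).toReal + T.indicator 1 z * ε :=
    add_pos_of_pos_of_nonneg (mul_pos (by linarith) hw) (mul_nonneg (T.indicator_one_nonneg z) hε0)
  rw [ProbabilityTheory.cond, ProbabilityTheory.cond, contaminate_apply hT hε0 hε1.le,
    restrict_contaminate hT, contaminate, smul_add, smul_smul, smul_smul, smul_smul,
    ← ENNReal.ofReal_toReal (measure_ne_top μ T), ENNReal.toReal_ofReal ENNReal.toReal_nonneg,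
    ← ENNReal.ofReal_inv_of_pos hD, ← ENNReal.ofReal_inv_of_pos hw,
    ← ENNReal.ofReal_mul (by positivity),
    ← ENNReal.ofReal_mul (by positivity), ← ENNReal.ofReal_mul (sub_nonneg.2 ht.2.le)]
  have := hw.ne'
  congr 3
  · rw [condFraction, one_sub_div hD.ne']
    field_simp
    ring
  · rw [condFraction]
    field_simp

end Contamination

section SliceOLS

variable {ι : Type*}

noncomputable def xMean (Q : Measure (ℝ × (ι → ℝ))) : ι → ℝ := fun i => ∫ z, z.2 i ∂Q

noncomputable def yMean (Q : Measure (ℝ × (ι → ℝ))) : ℝ := ∫ z, z.1 ∂Q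

noncomputable def xCov (Q : Measure (ℝ × (ι → ℝ))) : Matrix ι ι ℝ :=
  Matrix.of fun i j => cov[fun z => z.2 i, fun z => z.2 j; Q]

noncomputable def xyCov (Q : Measure (ℝ × (ι → ℝ))) : ι → ℝ :=
  fun i => cov[fun z => z.2 i, fun z => z.1; Q]

variable [Fintype ι]

noncomputable def olsSlope [DecidableEq ι] (Q : Measure (ℝ × (ι → ℝ))) : ι → ℝ :=
  (xCov Q)⁻¹ *ᵥ xyCov Q

section Contaminated

variable {Q : Measure (ℝ × (ι → ℝ))} [IsProbabilityMeasure Q] {t : ℝ} {z : ℝ × (ι → ℝ)}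

theorem xCov_contaminate (hX : ∀ i, MemLp (fun z => z.2 i) 2 Q) (ht0 : 0 ≤ t) (ht1 : t ≤ 1) :
    xCov (contaminate Q t z)
      = (1 - t) • (xCov Q + t • vecMulVec (z.2 - xMean Q) (z.2 - xMean Q)) := by
  ext i j
  simp only [xCov, of_apply, covariance_contaminate ht0 ht1 (hX i) (hX j), Matrix.smul_apply,
    Matrix.add_apply, vecMulVec_apply, Pi.sub_apply, xMean, smul_eq_mul]
  ring

theorem xyCov_contaminate (hX : ∀ i, MemLp (fun z => z.2 i) 2 Q)
    (hY : MemLp (fun z => z.1) 2 Q) (ht0 : 0 ≤ t) (ht1 : t ≤ 1) :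
    xyCov (contaminate Q t z)
      = (1 - t) • (xyCov Q + (t * (z.1 - yMean Q)) • (z.2 - xMean Q)) := by
  ext i
  simp only [xyCov, covariance_contaminate ht0 ht1 (hX i) hY, Pi.smul_apply, Pi.add_apply,
    Pi.sub_apply, xMean, yMean, smul_eq_mul]
  ring

theorem olsSlope_contaminate [DecidableEq ι] (hX : ∀ i, MemLp (fun z => z.2 i) 2 Q)
    (hY : MemLp (fun z => z.1) 2 Q) (hV : IsUnit (xCov Q).det) (ht0 : 0 ≤ t) (ht1 : t < 1)
    (hk : 1 + t * ((z.2 - xMean Q) ⬝ᵥ (xCov Q)⁻¹ *ᵥ (z.2 - xMean Q)) ≠ 0) :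
    olsSlope (contaminate Q t z) = olsSlope Q
      + (t / (1 + t * ((z.2 - xMean Q) ⬝ᵥ (xCov Q)⁻¹ *ᵥ (z.2 - xMean Q)))
          * (z.1 - yMean Q - olsSlope Q ⬝ᵥ (z.2 - xMean Q))) • (xCov Q)⁻¹ *ᵥ (z.2 - xMean Q) := by
  rw [olsSlope, xCov_contaminate hX ht0 ht1.le, xyCov_contaminate hX hY ht0 ht1.le]
  set d := z.2 - xMean Q
  have huv : 1 + d ⬝ᵥ (xCov Q)⁻¹ *ᵥ (t • d) ≠ 0 := by rwa [mulVec_smul, dotProduct_smul]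
  rw [← smul_vecMulVec, inv_smul_mulVec_smul (isUnit_det_add_vecMulVec hV huv)
    (sub_ne_zero.2 ht1.ne'), mul_comm t, ← smul_smul, inv_add_vecMulVec_mulVec hV huv]
  rw [mulVec_smul, dotProduct_smul, smul_eq_mul, smul_smul, ← olsSlope, dotProduct_comm d]
  congr 2
  ring

end Contaminated

theorem olsSlope_cond_contaminate [DecidableEq ι] {G : Measure (ℝ × (ι → ℝ))}
    [IsProbabilityMeasure G] (hX : ∀ i, MemLp (fun z => z.2 i) 2 G)
    (hY : MemLp (fun z => z.1) 2 G) {T : Set (ℝ × (ι → ℝ))} (hT : MeasurableSet T)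
    (hGT : G T ≠ 0) (hV : IsUnit (xCov (G[|T])).det) {z : ℝ × (ι → ℝ)} {ε : ℝ} (hε0 : 0 ≤ ε)
    (hε1 : ε < 1)
    (hk : 1 + condFraction (G T).toReal (T.indicator 1 z) ε
      * ((z.2 - xMean (G[|T])) ⬝ᵥ (xCov (G[|T]))⁻¹ *ᵥ (z.2 - xMean (G[|T]))) ≠ 0) :
    olsSlope ((contaminate G ε z)[|T]) = olsSlope (G[|T])
      + (condFraction (G T).toReal (T.indicator 1 z) ε
          / (1 + condFraction (G T).toReal (T.indicator 1 z) ε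
            * ((z.2 - xMean (G[|T])) ⬝ᵥ (xCov (G[|T]))⁻¹ *ᵥ (z.2 - xMean (G[|T]))))
          * (z.1 - yMean (G[|T]) - olsSlope (G[|T]) ⬝ᵥ (z.2 - xMean (G[|T]))))
        • (xCov (G[|T]))⁻¹ *ᵥ (z.2 - xMean (G[|T])) := by
  have := cond_isProbabilityMeasure hGT
  obtain ⟨ht0, ht1⟩ := condFraction_mem_Ico (ENNReal.toReal_pos hGT (measure_ne_top G T))
    (T.indicator_one_nonneg z) hε0 hε1
  rw [cond_contaminate hT hGT hε0 hε1]
  exact olsSlope_contaminate (fun i => (hX i).cond hGT) (hY.cond hGT) hV ht0 ht1 hk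

theorem hasDerivWithinAt_olsSlope_cond_contaminate [DecidableEq ι] {G : Measure (ℝ × (ι → ℝ))}
    [IsProbabilityMeasure G] (hX : ∀ i, MemLp (fun z => z.2 i) 2 G)
    (hY : MemLp (fun z => z.1) 2 G) {T : Set (ℝ × (ι → ℝ))} (hT : MeasurableSet T)
    (hGT : G T ≠ 0) (hV : IsUnit (xCov (G[|T])).det) (z : ℝ × (ι → ℝ)) (i : ι) :
    HasDerivWithinAt (fun ε => olsSlope ((contaminate G ε z)[|T]) i)
      (T.indicator 1 z / (G T).toReal
        * (z.1 - yMean (G[|T]) - olsSlope (G[|T]) ⬝ᵥ (z.2 - xMean (G[|T])))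
        * ((xCov (G[|T]))⁻¹ *ᵥ (z.2 - xMean (G[|T]))) i) (Set.Ici 0) 0 := by
  set t := condFraction (G T).toReal (T.indicator 1 z)
  set k := (z.2 - xMean (G[|T])) ⬝ᵥ (xCov (G[|T]))⁻¹ *ᵥ (z.2 - xMean (G[|T]))
  set r := z.1 - yMean (G[|T]) - olsSlope (G[|T]) ⬝ᵥ (z.2 - xMean (G[|T]))
  set v := (xCov (G[|T]))⁻¹ *ᵥ (z.2 - xMean (G[|T]))
  have ht := hasDerivAt_condFraction (ENNReal.toReal_pos hGT (measure_ne_top G T)).ne'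
    (T.indicator 1 z)
  have ht0 : t 0 = 0 := by simp [t, condFraction]
  have hs := ((hasDerivAt_div_one_add_mul k).comp_of_eq 0 ht ht0.symm).congr_deriv (one_mul _)
  have hk : ∀ᶠ ε in nhds 0, 1 + t ε * k ≠ 0 :=
    (continuousAt_const.add (ht.continuousAt.mul continuousAt_const)).eventually_ne
      (by simp [condFraction])
  refine (((hs.mul_const (r * v i)).const_add (olsSlope (G[|T]) i)).hasDerivWithinAt
    |>.congr_of_eventuallyEq_of_mem ?_ Set.self_mem_Ici).congr_deriv (by ring)
  filter_upwards [self_mem_nhdsWithin, nhdsWithin_le_nhds (hk.and (Iio_mem_nhds one_pos))]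
    with ε hε0 ⟨hkε, hε1⟩
  rw [olsSlope_cond_contaminate hX hY hT hGT hV hε0 hε1 hkε]
  simp only [Pi.add_apply, Pi.smul_apply, smul_eq_mul, Function.comp_apply]
  ring

end SliceOLS

/-- the fixed-slice influence function of the slice OLS slope: under
`ε`-contamination `G_ε = (1−ε)G + ε δ_{(y₀,x₀)}`, the map
`ε ↦ [Var_{G_ε}(X | Y ∈ S)]⁻¹ Cov_{G_ε}(X, Y | Y ∈ S)` is right-differentiable at `0`
with derivative `1{y₀ ∈ S} (1/w) r₀ Σ_S⁻¹ (x₀ − μ_S)`, where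
`r₀ = y₀ − μ_{y,S} − b_Sᵀ(x₀ − μ_S)`. -/
theorem stmt_18 {p : ℕ} (G : Measure (ℝ × (Fin p → ℝ))) [IsProbabilityMeasure G]
    (hG2y : MemLp (fun z : ℝ × (Fin p → ℝ) => z.1) 2 G)
    (hG2x : ∀ i, MemLp (fun z : ℝ × (Fin p → ℝ) => z.2 i) 2 G)
    (y₀ : ℝ) (x₀ : Fin p → ℝ)
    (S : Set ℝ) (hS : MeasurableSet S)
    (w : ℝ) (hw : w = (G (Prod.fst ⁻¹' S)).toReal) (hwpos : 0 < w)
    (μS : Fin p → ℝ) (hμS : ∀ i, μS i = ∫ z, z.2 i ∂(G[|Prod.fst ⁻¹' S]))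
    (μyS : ℝ) (hμyS : μyS = ∫ z, z.1 ∂(G[|Prod.fst ⁻¹' S]))
    (SigS : Matrix (Fin p) (Fin p) ℝ)
    (hSigS : ∀ i j, SigS i j = ∫ z, (z.2 i - μS i) * (z.2 j - μS j) ∂(G[|Prod.fst ⁻¹' S]))
    (hSigSinv : IsUnit SigS.det)
    (CovG : Fin p → ℝ)
    (hCovG : ∀ i, CovG i = ∫ z, (z.2 i - μS i) * (z.1 - μyS) ∂(G[|Prod.fst ⁻¹' S]))
    (bS : Fin p → ℝ) (hbS : bS = SigS⁻¹ *ᵥ CovG)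
    (r₀ : ℝ) (hr₀ : r₀ = y₀ - μyS - bS ⬝ᵥ (x₀ - μS)) :
    ∀ i, HasDerivWithinAt
      (fun ε : ℝ =>
        let Gε : Measure (ℝ × (Fin p → ℝ)) :=
          ENNReal.ofReal (1 - ε) • G + ENNReal.ofReal ε • Measure.dirac (y₀, x₀)
        let Qε := Gε[|Prod.fst ⁻¹' S]
        let mX : Fin p → ℝ := fun i => ∫ z, z.2 i ∂Qε
        let mY : ℝ := ∫ z, z.1 ∂Qε
        let V : Matrix (Fin p) (Fin p) ℝ :=
          Matrix.of fun i j => ∫ z, (z.2 i - mX i) * (z.2 j - mX j) ∂Qε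
        let C : Fin p → ℝ := fun i => ∫ z, (z.2 i - mX i) * (z.1 - mY) ∂Qε
        (V⁻¹ *ᵥ C) i)
      (S.indicator (fun _ => (1 : ℝ)) y₀ * (1 / w) * r₀ * (SigS⁻¹ *ᵥ (x₀ - μS)) i)
      (Set.Ici 0) 0 := by
  intro i
  set Q := G[|Prod.fst ⁻¹' S]
  have hGT : G (Prod.fst ⁻¹' S) ≠ 0 := fun h => by simp [h] at hw; linarith
  have hmean : xMean Q = μS := funext fun i => (hμS i).symm
  have hcov : xCov Q = SigS := by
    ext i j
    rw [hSigS, hμS, hμS]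
    rfl
  have hymean : yMean Q = μyS := hμyS.symm
  have hslope : olsSlope Q = bS := by
    have hxy : xyCov Q = CovG := by
      ext i
      rw [hCovG, hμS, hμyS]
      rfl
    rw [olsSlope, hcov, hxy, hbS]
  have hχ : (Prod.fst ⁻¹' S).indicator 1 (y₀, x₀) = S.indicator (fun _ => (1 : ℝ)) y₀ := by
    by_cases hy : y₀ ∈ S <;> simp [hy]
  have hderiv := hasDerivWithinAt_olsSlope_cond_contaminate hG2x hG2y
    (hS.preimage measurable_fst) hGT (hcov ▸ hSigSinv) (y₀, x₀) i
  rw [hslope, hcov, hmean, hymean, hχ, ← hw] at hderiv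
  exact hderiv.congr_deriv (by simp only [hr₀]; ring)
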